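/- arXiv:2305.05941 — 3 statements merged into one kernel-verified Lean document; each statement's English description precedes it below -/
import Mathlib

section
/- Let a, b, λ be real numbers with a < 0 < b and λ > 0. Then the Fresnel-type integral I(λ) = ∫_a^b e^{-iλη²/2} dη satisfies I(λ) = e^{-iπ/4}·√(2π)·λ^{-1/2} + I_Res(λ), where |I_Res(λ)| ≤ (2/λ)(1/|a| + 1/b). -/
open MeasureTheory Real Complex Filter Set Topology

lemma aux_hasDerivAt (c : ℂ) (hc : c ≠ 0) (η : ℝ) (hη : η ≠ 0) :
    HasDerivAt (fun x : ℝ => -Complex.exp (-c * (x:ℂ)^2) / (2*c*(x:ℂ)))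
      (Complex.exp (-c * (η:ℂ)^2) + Complex.exp (-c * (η:ℂ)^2) / (2*c*(η:ℂ)^2)) η := by
  have hz : (η:ℂ) ≠ 0 := Complex.ofReal_ne_zero.mpr hη
  have h1 : HasDerivAt (fun z : ℂ => -Complex.exp (-c * z^2) / (2*c*z))
      (Complex.exp (-c * (η:ℂ)^2) + Complex.exp (-c * (η:ℂ)^2) / (2*c*(η:ℂ)^2)) (η:ℂ) := by
    have hu : HasDerivAt (fun z : ℂ => -Complex.exp (-c * z^2))
        (2*c*(η:ℂ) * Complex.exp (-c * (η:ℂ)^2)) (η:ℂ) := by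
      have hq : HasDerivAt (fun z : ℂ => -c * z^2) (-c * (2*(η:ℂ))) (η:ℂ) := by
        simpa using ((hasDerivAt_pow 2 (η:ℂ)).const_mul (-c))
      have := (hq.cexp).neg
      refine this.congr_deriv ?_
      ring
    have hv : HasDerivAt (fun z : ℂ => 2*c*z) (2*c) (η:ℂ) := by
      simpa using (hasDerivAt_id (η:ℂ)).const_mul (2*c)
    have hvne : 2*c*(η:ℂ) ≠ 0 := by
      simp [hc, hz]
    have := hu.div hv hvne
    refine this.congr_deriv ?_
    field_simp
    ring
  exact h1.comp_ofReal

lemma norm_cexp_neg_mul_sq_le (c : ℂ) (hc : 0 ≤ c.re) (η : ℝ) :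
    ‖Complex.exp (-c * (η:ℂ)^2)‖ ≤ 1 := by
  rw [Complex.norm_exp]
  have : (-c * (η:ℂ)^2).re = -(c.re * η^2) := by
    simp [Complex.mul_re, ← Complex.ofReal_pow]
  rw [this]
  exact Real.exp_le_one_iff.mpr (by nlinarith [sq_nonneg η])

lemma finite_ibp_bound (l : ℝ) (hl : 0 < l) (c : ℂ) (hcre : 0 < c.re) (hcim : c.im = l/2)
    (b R : ℝ) (hb : 0 < b) (hR : b ≤ R) :
    ‖∫ η in b..R, Complex.exp (-c * (η:ℂ)^2)‖ ≤ 2/(l*b) := by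
  have hc : c ≠ 0 := by
    intro h; rw [h] at hcre; simp at hcre
  have habs : l/2 ≤ ‖c‖ := by
    calc l/2 = |c.im| := by rw [hcim]; exact (abs_of_pos (by positivity)).symm
    _ ≤ ‖c‖ := Complex.abs_im_le_norm c
  have habs' : 0 < ‖c‖ := lt_of_lt_of_le (by positivity) habs
  have hRpos : 0 < R := lt_of_lt_of_le hb hR
  -- positivity of points in the interval
  have hmem : ∀ η ∈ Set.uIcc b R, (0:ℝ) < η := by
    intro η hη
    rw [Set.uIcc_of_le hR] at hη
    exact lt_of_lt_of_le hb hη.1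
  -- continuity of integrands
  have hcont1 : Continuous fun η : ℝ => Complex.exp (-c * (η:ℂ)^2) := by
    fun_prop
  have hcont2 : ContinuousOn (fun η : ℝ => Complex.exp (-c * (η:ℂ)^2) / (2*c*(η:ℂ)^2))
      (Set.uIcc b R) := by
    apply ContinuousOn.div (hcont1.continuousOn)
    · fun_prop
    · intro η hη
      have := hmem η hη
      simp [hc, Complex.ofReal_ne_zero.mpr this.ne']
  have hint2 : IntervalIntegrable (fun η : ℝ => Complex.exp (-c * (η:ℂ)^2) / (2*c*(η:ℂ)^2))
      volume b R := hcont2.intervalIntegrable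
  have hint1 : IntervalIntegrable (fun η : ℝ => Complex.exp (-c * (η:ℂ)^2)) volume b R :=
    hcont1.intervalIntegrable _ _
  -- FTC
  have hftc : ∫ η in b..R, (Complex.exp (-c * (η:ℂ)^2) + Complex.exp (-c * (η:ℂ)^2) / (2*c*(η:ℂ)^2))
      = (-Complex.exp (-c * (R:ℂ)^2) / (2*c*(R:ℂ))) - (-Complex.exp (-c * (b:ℂ)^2) / (2*c*(b:ℂ))) := by
    apply intervalIntegral.integral_eq_sub_of_hasDerivAt
    · intro η hη
      exact aux_hasDerivAt c hc η (hmem η hη).ne'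
    · exact hint1.add hint2
  rw [intervalIntegral.integral_add hint1 hint2] at hftc
  have key : ∫ η in b..R, Complex.exp (-c * (η:ℂ)^2)
      = (-Complex.exp (-c * (R:ℂ)^2) / (2*c*(R:ℂ))) - (-Complex.exp (-c * (b:ℂ)^2) / (2*c*(b:ℂ)))
        - ∫ η in b..R, Complex.exp (-c * (η:ℂ)^2) / (2*c*(η:ℂ)^2) := by
    linear_combination hftc
  rw [key]
  -- bound each term
  have hbd : ∀ η : ℝ, 0 < η → ‖-Complex.exp (-c * (η:ℂ)^2) / (2*c*(η:ℂ))‖ ≤ 1/(l*η) := by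
    intro η hη
    rw [norm_div, norm_neg]
    have h2 : ‖2*c*(η:ℂ)‖ = 2 * ‖c‖ * η := by
      simp [map_mul, abs_of_pos hη]
    rw [h2]
    have h3 : l * η ≤ 2 * ‖c‖ * η := by nlinarith
    exact div_le_div₀ (by positivity) (norm_cexp_neg_mul_sq_le c hcre.le η) (by positivity) h3
  have hbdint : ‖∫ η in b..R, Complex.exp (-c * (η:ℂ)^2) / (2*c*(η:ℂ)^2)‖
      ≤ (1/l) * (1/b - 1/R) := by
    have hzpow : ∫ η in b..R, (η:ℝ)^(-2:ℤ) = (R^(-1:ℤ) - b^(-1:ℤ))/(-1) := by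
      rw [integral_zpow]
      · norm_num
      · right
        constructor
        · decide
        · intro h0
          exact absurd (hmem 0 h0) (lt_irrefl 0)
    have heq : (1/l) * (1/b - 1/R) = ∫ η in b..R, (1/l) * (η:ℝ)^(-2:ℤ) := by
      rw [intervalIntegral.integral_const_mul, hzpow]
      field_simp
      ring
    have hle := intervalIntegral.norm_integral_le_of_norm_le
      (f := fun η : ℝ => Complex.exp (-c * (η:ℂ)^2) / (2*c*(η:ℂ)^2))
      (g := fun η : ℝ => (1/l) * (η:ℝ)^(-2:ℤ)) (μ := volume) (a := b) (b := R) hR ?_ ?_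
    · refine hle.trans ?_
      rw [← heq]
    · filter_upwards with η hη
      have hbR : 0 < b ⊓ R := lt_inf_iff.mpr ⟨hb, hRpos⟩
      have hηpos : 0 < η := hb.trans hη.1
      rw [norm_div]
      have h2 : ‖2*c*(η:ℂ)^2‖ = 2 * ‖c‖ * η^2 := by
        simp [map_mul, map_pow, abs_of_pos hηpos, _root_.sq_abs]
      rw [h2]
      have : l * η^2 ≤ 2 * ‖c‖ * η^2 := by nlinarith [sq_nonneg η]
      calc ‖Complex.exp (-c * (η:ℂ)^2)‖ / (2 * ‖c‖ * η^2)
          ≤ 1 / (l * η^2) :=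
            div_le_div₀ (by positivity) (norm_cexp_neg_mul_sq_le c hcre.le η) (by positivity) this
        _ = (1/l) * η^(-2:ℤ) := by
            rw [zpow_neg]
            field_simp
    · apply ContinuousOn.intervalIntegrable
      apply ContinuousOn.mul continuousOn_const
      apply ContinuousOn.zpow₀ continuousOn_id
      intro x hx
      exact Or.inl (hmem x hx).ne'
  calc ‖(-Complex.exp (-c * (R:ℂ)^2) / (2*c*(R:ℂ))) - (-Complex.exp (-c * (b:ℂ)^2) / (2*c*(b:ℂ)))
        - ∫ η in b..R, Complex.exp (-c * (η:ℂ)^2) / (2*c*(η:ℂ)^2)‖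
      ≤ ‖(-Complex.exp (-c * (R:ℂ)^2) / (2*c*(R:ℂ)))‖ + ‖(-Complex.exp (-c * (b:ℂ)^2) / (2*c*(b:ℂ)))‖
        + ‖∫ η in b..R, Complex.exp (-c * (η:ℂ)^2) / (2*c*(η:ℂ)^2)‖ := by
        apply (norm_sub_le _ _).trans
        gcongr
        exact norm_sub_le _ _
    _ ≤ 1/(l*R) + 1/(l*b) + (1/l)*(1/b - 1/R) := by
        gcongr <;> first
          | exact hbd R hRpos
          | exact hbd b hb
          | exact hbdint
    _ = 2/(l*b) := by field_simp; ring

lemma tail_Ioi_bound (l : ℝ) (hl : 0 < l) (c : ℂ) (hcre : 0 < c.re) (hcim : c.im = l/2)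
    (b : ℝ) (hb : 0 < b) :
    ‖∫ η in Set.Ioi b, Complex.exp (-c * (η:ℂ)^2)‖ ≤ 2/(l*b) := by
  have hint : IntegrableOn (fun η : ℝ => Complex.exp (-c * (η:ℂ)^2)) (Set.Ioi b) :=
    (integrable_cexp_neg_mul_sq hcre).integrableOn
  have htend := intervalIntegral_tendsto_integral_Ioi b hint tendsto_id
  refine le_of_tendsto htend.norm ?_
  filter_upwards [eventually_ge_atTop b] with R hR
  exact finite_ibp_bound l hl c hcre hcim b R hb hR

lemma eps_estimate (a b l : ℝ) (ha : a < 0) (hb : 0 < b) (hl : 0 < l)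
    (c : ℂ) (hcre : 0 < c.re) (hcim : c.im = l/2) :
    ‖(∫ η in a..b, Complex.exp (-c * (η:ℂ)^2)) - ((Real.pi : ℂ)/c) ^ (1/2 : ℂ)‖
      ≤ (2 / l) * (1 / |a| + 1 / b) := by
  have hInt := integrable_cexp_neg_mul_sq hcre
  have hfull : ∫ η : ℝ, Complex.exp (-c * (η:ℂ)^2) = ((Real.pi : ℂ)/c) ^ (1/2 : ℂ) :=
    integral_gaussian_complex hcre
  have hsplit1 : (∫ η in Set.Iic b, Complex.exp (-c * (η:ℂ)^2))
      + (∫ η in Set.Ioi b, Complex.exp (-c * (η:ℂ)^2))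
      = ∫ η : ℝ, Complex.exp (-c * (η:ℂ)^2) :=
    intervalIntegral.integral_Iic_add_Ioi hInt.integrableOn hInt.integrableOn
  have hab : (∫ η in a..b, Complex.exp (-c * (η:ℂ)^2))
      = (∫ η in Set.Iic b, Complex.exp (-c * (η:ℂ)^2))
        - (∫ η in Set.Iic a, Complex.exp (-c * (η:ℂ)^2)) :=
    (intervalIntegral.integral_Iic_sub_Iic hInt.integrableOn hInt.integrableOn).symm
  -- left tail by symmetry
  have hleft : (∫ η in Set.Iic a, Complex.exp (-c * (η:ℂ)^2))
      = ∫ η in Set.Ioi (-a), Complex.exp (-c * (η:ℂ)^2) := by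
    rw [← _root_.integral_comp_neg_Iic a (fun x : ℝ => Complex.exp (-c * (x:ℂ)^2))]
    simp only [Complex.ofReal_neg, neg_sq]
  have hL : ‖∫ η in Set.Iic a, Complex.exp (-c * (η:ℂ)^2)‖ ≤ 2/(l*(-a)) := by
    rw [hleft]
    exact tail_Ioi_bound l hl c hcre hcim (-a) (by linarith)
  have hR : ‖∫ η in Set.Ioi b, Complex.exp (-c * (η:ℂ)^2)‖ ≤ 2/(l*b) :=
    tail_Ioi_bound l hl c hcre hcim b hb
  have hdiff : (∫ η in a..b, Complex.exp (-c * (η:ℂ)^2)) - ((Real.pi : ℂ)/c) ^ (1/2 : ℂ)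
      = -((∫ η in Set.Iic a, Complex.exp (-c * (η:ℂ)^2))
          + (∫ η in Set.Ioi b, Complex.exp (-c * (η:ℂ)^2))) := by
    rw [hab, ← hfull, ← hsplit1]
    ring
  rw [hdiff, norm_neg]
  calc ‖(∫ η in Set.Iic a, Complex.exp (-c * (η:ℂ)^2))
          + (∫ η in Set.Ioi b, Complex.exp (-c * (η:ℂ)^2))‖
      ≤ 2/(l*(-a)) + 2/(l*b) := (norm_add_le _ _).trans (by gcongr)
    _ = (2 / l) * (1 / |a| + 1 / b) := by
        rw [abs_of_neg ha, mul_add, div_mul_eq_div_div, div_mul_eq_div_div,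
          div_eq_mul_one_div (2/l) (-a), div_eq_mul_one_div (2/l) b]

lemma z_eq(l : ℝ) (hl : 0 < l) :
    (Real.pi : ℂ) / (Complex.I * (l:ℂ) / 2) = ((2*Real.pi/l : ℝ):ℂ) * (-Complex.I) := by
  have hl' : (l:ℂ) ≠ 0 := Complex.ofReal_ne_zero.mpr hl.ne'
  rw [div_eq_iff (by simp [hl', Complex.I_ne_zero])]
  push_cast
  field_simp
  linear_combination Complex.I_sq

lemma S_eq (l : ℝ) (hl : 0 < l) :
    ((Real.pi : ℂ) / (Complex.I * (l:ℂ) / 2)) ^ (1/2 : ℂ)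
      = Complex.exp (-Complex.I * (Real.pi:ℂ) / 4) * (Real.sqrt (2*Real.pi) : ℂ)
        / (Real.sqrt l : ℂ) := by
  have hl' : (l:ℂ) ≠ 0 := Complex.ofReal_ne_zero.mpr hl.ne'
  set r : ℝ := 2*Real.pi/l with hr_def
  have hr : (0:ℝ) < r := by positivity
  have hz : (Real.pi : ℂ) / (Complex.I * (l:ℂ) / 2) = ((r:ℝ):ℂ) * (-Complex.I) := by
    rw [div_eq_iff (by simp [hl', Complex.I_ne_zero])]
    rw [hr_def]
    push_cast
    field_simp
    linear_combination Complex.I_sq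
  have hne : ((r:ℝ):ℂ) * (-Complex.I) ≠ 0 := by
    simp [Complex.I_ne_zero, hr.ne']
  have habs : ‖((r:ℝ):ℂ) * (-Complex.I)‖ = r := by
    simp [map_mul, abs_of_pos hr]
  have harg : (((r:ℝ):ℂ) * (-Complex.I)).arg = -(Real.pi/2) := by
    rw [Complex.arg_real_mul _ hr, Complex.arg_neg_I]
  have hlog : Complex.log (((r:ℝ):ℂ) * (-Complex.I))
      = ((Real.log r : ℝ):ℂ) - ((Real.pi/2 : ℝ):ℂ) * Complex.I := by
    apply Complex.ext
    · rw [Complex.log_re, habs]; simp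
    · rw [Complex.log_im, harg]; simp
  have hsqrt : Real.exp (Real.log r / 2) = Real.sqrt r := by
    rw [Real.sqrt_eq_rpow, Real.rpow_def_of_pos hr]
    ring_nf
  have hsd : Real.sqrt r = Real.sqrt (2*Real.pi) / Real.sqrt l := by
    rw [hr_def, Real.sqrt_div (by positivity)]
  rw [hz, Complex.cpow_def_of_ne_zero hne, hlog]
  rw [show (((Real.log r:ℝ):ℂ) - ((Real.pi/2:ℝ):ℂ)*Complex.I) * (1/2:ℂ)
      = ((Real.log r / 2 : ℝ):ℂ) + (-Complex.I*(Real.pi:ℂ)/4) by push_cast; ring]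
  rw [Complex.exp_add, ← Complex.ofReal_exp, hsqrt, hsd]
  push_cast
  ring

theorem fresnel_finite_interval (a b l : ℝ) (ha : a < 0) (hb : 0 < b) (hl : 0 < l) :
    ‖(∫ η in a..b, Complex.exp (-Complex.I * (l : ℂ) * (η : ℂ)^2 / 2)) -
        Complex.exp (-Complex.I * (Real.pi : ℂ) / 4) * (Real.sqrt (2 * Real.pi) : ℂ) /
          (Real.sqrt l : ℂ)‖ ≤ (2 / l) * (1 / |a| + 1 / b) := by
  set c0 : ℂ := Complex.I * (l:ℂ) / 2 with hc0_def
  set ε : ℕ → ℝ := fun n => 1 / ((n:ℝ) + 1) with hε_def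
  set cc : ℕ → ℂ := fun n => ((ε n : ℝ):ℂ) + c0 with hcc_def
  have hεpos : ∀ n, 0 < ε n := fun n => by positivity
  have hεlim : Tendsto ε atTop (𝓝 0) := tendsto_one_div_add_atTop_nhds_zero_nat
  have hcclim : Tendsto cc atTop (𝓝 c0) := by
    have h1 : Tendsto (fun n => ((ε n : ℝ):ℂ)) atTop (𝓝 0) := by
      rw [show (0:ℂ) = ((0:ℝ):ℂ) by norm_num]
      exact (Complex.continuous_ofReal.tendsto 0).comp hεlim
    simpa using h1.add tendsto_const_nhds
  -- rewrite the integrand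
  have hint_eq : (∫ η in a..b, Complex.exp (-Complex.I * (l : ℂ) * (η : ℂ)^2 / 2))
      = ∫ η in a..b, Complex.exp (-c0 * (η:ℂ)^2) := by
    congr 1
    ext η
    rw [hc0_def]
    ring_nf
  rw [hint_eq, ← S_eq l hl, ← hc0_def]
  -- limit of the interval integrals
  have h1 : Tendsto (fun n => ∫ η in a..b, Complex.exp (-(cc n) * (η:ℂ)^2)) atTop
      (𝓝 (∫ η in a..b, Complex.exp (-c0 * (η:ℂ)^2))) := by
    apply intervalIntegral.tendsto_integral_filter_of_dominated_convergence
      (bound := fun _ => (1:ℝ))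
    · filter_upwards with n
      exact (Continuous.aestronglyMeasurable (by fun_prop)).restrict
    · filter_upwards with n
      filter_upwards with η
      intro _hη
      have : (0:ℝ) ≤ (cc n).re := by
        simp [hcc_def, hc0_def, (hεpos n).le]
      rw [Complex.norm_exp]
      have hre : (-(cc n) * (η:ℂ)^2).re = -((cc n).re * η^2) := by
        simp [Complex.mul_re, ← Complex.ofReal_pow]
      rw [hre]
      exact Real.exp_le_one_iff.mpr (by nlinarith [sq_nonneg η])
    · exact intervalIntegrable_const
    · filter_upwards with η
      intro _hη
      have hcont : Continuous fun z : ℂ => Complex.exp (-z * (η:ℂ)^2) := by fun_prop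
      exact (hcont.tendsto c0).comp hcclim
  -- limit of the constants
  have him : c0 ≠ 0 := by
    rw [hc0_def]
    simp [Complex.I_ne_zero, Complex.ofReal_ne_zero.mpr hl.ne']
  have hslit : (Real.pi:ℂ)/c0 ∈ Complex.slitPlane := by
    rw [hc0_def, z_eq l hl]
    rw [Complex.mem_slitPlane_iff]
    right
    simp [Real.pi_ne_zero, hl.ne', Real.pi_pos.ne']
  have h2 : Tendsto (fun n => ((Real.pi:ℂ)/(cc n)) ^ (1/2:ℂ)) atTop
      (𝓝 (((Real.pi:ℂ)/c0) ^ (1/2:ℂ))) := by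
    have hdiv : Tendsto (fun n => (Real.pi:ℂ)/(cc n)) atTop (𝓝 ((Real.pi:ℂ)/c0)) :=
      tendsto_const_nhds.div hcclim him
    exact (continuousAt_cpow_const hslit).tendsto.comp hdiv
  -- conclude
  have key : ∀ n : ℕ, ‖(∫ η in a..b, Complex.exp (-(cc n) * (η:ℂ)^2))
      - ((Real.pi:ℂ)/(cc n)) ^ (1/2:ℂ)‖ ≤ (2 / l) * (1 / |a| + 1 / b) := by
    intro n
    apply eps_estimate a b l ha hb hl
    · simp [hcc_def, hc0_def, hεpos n]
    · simp [hcc_def, hc0_def]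
  exact le_of_tendsto (h1.sub h2).norm (Eventually.of_forall key)
end

section
/- Let a < 0 < b, t > 0, λ > 0, and let f(η) = q(η)·e^{i t p(η)} where p ∈ C³[a,b] is real-valued and q ∈ C³[a,b] is complex-valued. Then |∫_a^b e^{-iλη²/2}(f(η) − f(0)) dη| ≤ C(1 + b − a)(1 + ‖p‖_{C³[a,b]})³ ‖q‖_{C³[a,b]} (1 + t)² λ^{-1}, where C > 0 is an absolute constant independent of a, b, t, λ, p, q. -/
open MeasureTheory Real

/-- The `C^k` norm of a function on a set: the supremum of the norms of the
derivatives of order `≤ k` (taken within the set). -/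
noncomputable def Cnorm (k : ℕ) (s : Set ℝ) (f : ℝ → ℂ) : ℝ :=
  ⨆ i : Fin (k + 1), ⨆ x : s, ‖iteratedDerivWithin i f s x‖

lemma Cnorm_nonneg (k : ℕ) (s : Set ℝ) (f : ℝ → ℂ) : 0 ≤ Cnorm k s f :=
  Real.iSup_nonneg fun _ => Real.iSup_nonneg fun _ => norm_nonneg _

lemma norm_le_Cnorm {a b : ℝ} (hab : a < b) {f : ℝ → ℂ}
    (hf : ContDiffOn ℝ 3 f (Set.Icc a b)) (i : ℕ) (hi : i ≤ 3) {x : ℝ}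
    (hx : x ∈ Set.Icc a b) :
    ‖iteratedDerivWithin i f (Set.Icc a b) x‖ ≤ Cnorm 3 (Set.Icc a b) f := by
  have hcont : ContinuousOn (iteratedDerivWithin i f (Set.Icc a b)) (Set.Icc a b) :=
    hf.continuousOn_iteratedDerivWithin (by exact_mod_cast hi) (uniqueDiffOn_Icc hab)
  have hbdd := (isCompact_Icc.image_of_continuousOn hcont.norm).bddAbove
  rw [Set.image_eq_range] at hbdd
  have h1 : ‖iteratedDerivWithin i f (Set.Icc a b) x‖ ≤
      ⨆ y : Set.Icc a b, ‖iteratedDerivWithin i f (Set.Icc a b) y‖ :=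
    le_ciSup hbdd (⟨x, hx⟩ : Set.Icc a b)
  unfold Cnorm
  exact le_ciSup_of_le (Set.Finite.bddAbove (Set.finite_range _))
    (⟨i, by omega⟩ : Fin (3 + 1)) h1

lemma ibp_aux {c d : ℝ} (hcd : c ≤ d) (u v u' v' : ℝ → ℂ)
    (hu : ∀ x ∈ Set.Ioo c d, HasDerivAt u (u' x) x)
    (hv : ∀ x ∈ Set.Ioo c d, HasDerivAt v (v' x) x)
    (hcu : ContinuousOn u (Set.Icc c d)) (hcv : ContinuousOn v (Set.Icc c d))
    (h1 : IntervalIntegrable (fun x => u' x * v x) volume c d)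
    (h2 : IntervalIntegrable (fun x => u x * v' x) volume c d) :
    ∫ x in c..d, u' x * v x = u d * v d - u c * v c - ∫ x in c..d, u x * v' x := by
  have hftc : ∫ x in c..d, (u' x * v x + u x * v' x) = u d * v d - u c * v c := by
    apply intervalIntegral.integral_eq_sub_of_hasDeriv_right_of_le hcd (hcu.mul hcv)
      (fun x hx => (((hu x hx).mul (hv x hx)).hasDerivWithinAt)) (h1.add h2)
  rw [intervalIntegral.integral_add h1 h2] at hftc
  linear_combination hftc

lemma final_arith {a b t A Q : ℝ} (ha : a < 0) (hb : 0 < b) (ht : 0 < t)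
    (hA0 : 0 ≤ A) (hQ0 : 0 ≤ Q) :
    2 * (Q * (1 + t * A)) + (0 - a) * (Q * (1 + 3 * (t * A) + (t * A)^2)) +
      (2 * (Q * (1 + t * A)) + (b - 0) * (Q * (1 + 3 * (t * A) + (t * A)^2))) ≤
    4 * (1 + b - a) * (1 + A)^3 * Q * (1 + t)^2 := by
  have htA : 0 ≤ t * A := mul_nonneg ht.le hA0
  have k1 : (1:ℝ) ≤ 1 + t := by linarith
  have k2 : (1:ℝ) ≤ 1 + A := by linarith
  have e1 : 1 + t * A ≤ (1 + t) * (1 + A) := by nlinarith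
  have g1 : (1:ℝ) ≤ (1 + t) * (1 + A)^2 := by nlinarith [sq_nonneg A, mul_nonneg ht.le (sq_nonneg (1 + A))]
  have e2 : (1 + t) * (1 + A) ≤ (1 + t)^2 * (1 + A)^3 := by
    have h0 : (0:ℝ) ≤ (1 + t) * (1 + A) := by positivity
    calc (1 + t) * (1 + A) = ((1 + t) * (1 + A)) * 1 := by ring
      _ ≤ ((1 + t) * (1 + A)) * ((1 + t) * (1 + A)^2) :=
          mul_le_mul_of_nonneg_left g1 h0
      _ = (1 + t)^2 * (1 + A)^3 := by ring
  have e3 : 1 + 3 * (t * A) + (t * A)^2 ≤ 4 * ((1 + t)^2 * (1 + A)^3) := by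
    have e4 : (1 + t * A)^2 ≤ ((1 + t) * (1 + A))^2 := by nlinarith
    have e5 : ((1 + t) * (1 + A))^2 ≤ (1 + t)^2 * (1 + A)^3 := by
      calc ((1 + t) * (1 + A))^2 = ((1 + t) * (1 + A))^2 * 1 := by ring
        _ ≤ ((1 + t) * (1 + A))^2 * (1 + A) :=
            mul_le_mul_of_nonneg_left k2 (sq_nonneg _)
        _ = (1 + t)^2 * (1 + A)^3 := by ring
    nlinarith
  have hM1b : Q * (1 + t * A) ≤ Q * ((1 + t)^2 * (1 + A)^3) :=
    mul_le_mul_of_nonneg_left (e1.trans e2) hQ0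
  have hM2b : Q * (1 + 3 * (t * A) + (t * A)^2) ≤ 4 * (Q * ((1 + t)^2 * (1 + A)^3)) := by
    nlinarith [mul_le_mul_of_nonneg_left e3 hQ0]
  have hba : (0:ℝ) < b - a := by linarith
  have hQD : 0 ≤ Q * ((1 + t)^2 * (1 + A)^3) := by positivity
  nlinarith [mul_le_mul_of_nonneg_left hM2b hba.le, mul_nonneg hba.le hQD]

theorem stationary_free_phase_estimate :
    ∃ C : ℝ, 0 < C ∧ ∀ (a b t l : ℝ) (p : ℝ → ℝ) (q : ℝ → ℂ),
      a < 0 → 0 < b → 0 < t → 0 < l →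
      ContDiffOn ℝ 3 p (Set.Icc a b) → ContDiffOn ℝ 3 q (Set.Icc a b) →
      ‖∫ η in a..b, Complex.exp (-Complex.I * (l : ℂ) * (η : ℂ)^2 / 2) *
          (q η * Complex.exp (Complex.I * (t : ℂ) * (p η : ℂ)) -
           q 0 * Complex.exp (Complex.I * (t : ℂ) * (p 0 : ℂ)))‖ ≤
        C * (1 + b - a) * (1 + Cnorm 3 (Set.Icc a b) (fun x => (p x : ℂ)))^3 *
          Cnorm 3 (Set.Icc a b) q * (1 + t)^2 / l := by
  refine ⟨4, by norm_num, ?_⟩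
  intro a b t l p q ha hb ht hl hp hq
  set s : Set ℝ := Set.Icc a b with hs_def
  have hab : a < b := ha.trans hb
  have h0s : (0:ℝ) ∈ s := ⟨ha.le, hb.le⟩
  have has : a ∈ s := ⟨le_refl a, hab.le⟩
  have hbs : b ∈ s := ⟨hab.le, le_refl b⟩
  have hus : UniqueDiffOn ℝ s := uniqueDiffOn_Icc hab
  set pc : ℝ → ℂ := fun x => (p x : ℂ) with hpc_def
  have hpc : ContDiffOn ℝ 3 pc s :=
    (Complex.ofRealCLM.contDiff.comp_contDiffOn hp).congr fun x _ => rfl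
  set A := Cnorm 3 s pc with hA_def
  set Q := Cnorm 3 s q with hQ_def
  have hA0 : 0 ≤ A := Cnorm_nonneg _ _ _
  have hQ0 : 0 ≤ Q := Cnorm_nonneg _ _ _
  have htA : 0 ≤ t * A := mul_nonneg ht.le hA0
  set q1 : ℝ → ℂ := derivWithin q s with hq1_def
  set q2 : ℝ → ℂ := derivWithin q1 s with hq2_def
  set p1 : ℝ → ℂ := derivWithin pc s with hp1_def
  set p2 : ℝ → ℂ := derivWithin p1 s with hp2_def
  set E : ℝ → ℂ := fun x => Complex.exp (Complex.I * (t : ℂ) * (p x : ℂ)) with hE_def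
  set F : ℝ → ℂ := fun x => q x * E x with hF_def
  set f1 : ℝ → ℂ := fun x => (q1 x + q x * (Complex.I * t * p1 x)) * E x with hf1_def
  set f2 : ℝ → ℂ := fun x => (q2 x + 2 * q1 x * (Complex.I * t * p1 x)
      + q x * (Complex.I * t * p2 x) + q x * (Complex.I * t * p1 x)^2) * E x with hf2_def
  set G : ℝ → ℂ := fun x => F x - F 0 with hG_def
  set M1 : ℝ := Q * (1 + t * A) with hM1_def
  set M2 : ℝ := Q * (1 + 3 * (t * A) + (t * A)^2) with hM2_def
  have hM10 : 0 ≤ M1 := by rw [hM1_def]; nlinarith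
  have hM20 : 0 ≤ M2 := by rw [hM2_def]; nlinarith [sq_nonneg (t * A)]
  -- norm bounds from Cnorm
  have hq_le : ∀ x ∈ s, ‖q x‖ ≤ Q := fun x hx => by
    have h1 := norm_le_Cnorm hab hq 0 (by norm_num) hx
    rwa [iteratedDerivWithin_zero] at h1
  have hq1_le : ∀ x ∈ s, ‖q1 x‖ ≤ Q := fun x hx => by
    have h1 := norm_le_Cnorm hab hq 1 (by norm_num) hx
    rwa [iteratedDerivWithin_one] at h1
  have hq2_le : ∀ x ∈ s, ‖q2 x‖ ≤ Q := fun x hx => by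
    have h1 := norm_le_Cnorm hab hq 2 (by norm_num) hx
    rwa [show (2:ℕ) = 1 + 1 from rfl, iteratedDerivWithin_succ,
      derivWithin_congr (fun y hy => congrFun iteratedDerivWithin_one y)
        (congrFun iteratedDerivWithin_one x)] at h1
  have hp1_le : ∀ x ∈ s, ‖p1 x‖ ≤ A := fun x hx => by
    have h1 := norm_le_Cnorm hab hpc 1 (by norm_num) hx
    rwa [iteratedDerivWithin_one] at h1
  have hp2_le : ∀ x ∈ s, ‖p2 x‖ ≤ A := fun x hx => by
    have h1 := norm_le_Cnorm hab hpc 2 (by norm_num) hx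
    rwa [show (2:ℕ) = 1 + 1 from rfl, iteratedDerivWithin_succ,
      derivWithin_congr (fun y hy => congrFun iteratedDerivWithin_one y)
        (congrFun iteratedDerivWithin_one x)] at h1
  -- derivative facts
  have hq1d : ∀ x ∈ s, HasDerivWithinAt q (q1 x) s x :=
    fun x hx => ((hq.differentiableOn (by norm_num)) x hx).hasDerivWithinAt
  have hq2d : ∀ x ∈ s, HasDerivWithinAt q1 (q2 x) s x :=
    fun x hx => (((hq.derivWithin (m := 2) hus (by norm_num)).differentiableOn (by norm_num)) x
      hx).hasDerivWithinAt
  have hp1d : ∀ x ∈ s, HasDerivWithinAt pc (p1 x) s x :=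
    fun x hx => ((hpc.differentiableOn (by norm_num)) x hx).hasDerivWithinAt
  have hp2d : ∀ x ∈ s, HasDerivWithinAt p1 (p2 x) s x :=
    fun x hx => (((hpc.derivWithin (m := 2) hus (by norm_num)).differentiableOn (by norm_num)) x
      hx).hasDerivWithinAt
  have hEnorm : ∀ x : ℝ, ‖E x‖ = 1 := by
    intro x
    simp only [hE_def]
    rw [Complex.norm_exp]
    simp [Complex.mul_re, Complex.mul_im]
  have hEd : ∀ x ∈ s, HasDerivWithinAt E (Complex.I * t * p1 x * E x) s x := by
    intro x hx
    have h1 : HasDerivWithinAt (fun y : ℝ => Complex.I * (t : ℂ) * (p y : ℂ))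
        (Complex.I * t * p1 x) s x := (hp1d x hx).const_mul _
    have h2 := h1.cexp
    have heq : Complex.exp (Complex.I * (t:ℂ) * (p x : ℂ)) * (Complex.I * t * p1 x)
        = Complex.I * t * p1 x * E x := by simp only [hE_def]; ring
    rw [← heq]
    exact h2
  have hFd : ∀ x ∈ s, HasDerivWithinAt F (f1 x) s x := by
    intro x hx
    have h1 := (hq1d x hx).mul (hEd x hx)
    have heq : q1 x * E x + q x * (Complex.I * t * p1 x * E x) = f1 x := by
      simp only [hf1_def]; ring
    rw [← heq]
    exact h1
  have hf1d : ∀ x ∈ s, HasDerivWithinAt f1 (f2 x) s x := by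
    intro x hx
    have hinner : HasDerivWithinAt (fun y => q1 y + q y * (Complex.I * (t:ℂ) * p1 y))
        (q2 x + (q1 x * (Complex.I * t * p1 x) + q x * (Complex.I * t * p2 x))) s x :=
      (hq2d x hx).add ((hq1d x hx).mul ((hp2d x hx).const_mul _))
    have h1 := hinner.mul (hEd x hx)
    have heq : (q2 x + (q1 x * (Complex.I * t * p1 x) + q x * (Complex.I * t * p2 x))) * E x
        + (q1 x + q x * (Complex.I * (t:ℂ) * p1 x)) * (Complex.I * t * p1 x * E x) = f2 x := by
      simp only [hf2_def]; ring
    rw [← heq]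
    exact h1
  have hz_le : ∀ x ∈ s, ‖Complex.I * (t:ℂ) * p1 x‖ ≤ t * A := by
    intro x hx
    rw [norm_mul, norm_mul, Complex.norm_I, one_mul, Complex.norm_real,
      Real.norm_eq_abs, abs_of_pos ht]
    exact mul_le_mul_of_nonneg_left (hp1_le x hx) ht.le
  have hw_le : ∀ x ∈ s, ‖Complex.I * (t:ℂ) * p2 x‖ ≤ t * A := by
    intro x hx
    rw [norm_mul, norm_mul, Complex.norm_I, one_mul, Complex.norm_real,
      Real.norm_eq_abs, abs_of_pos ht]
    exact mul_le_mul_of_nonneg_left (hp2_le x hx) ht.le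
  have hf1_le : ∀ x ∈ s, ‖f1 x‖ ≤ M1 := by
    intro x hx
    simp only [hf1_def]
    rw [norm_mul, hEnorm, mul_one]
    calc ‖q1 x + q x * (Complex.I * (t:ℂ) * p1 x)‖
        ≤ ‖q1 x‖ + ‖q x‖ * ‖Complex.I * (t:ℂ) * p1 x‖ := by
          refine (norm_add_le _ _).trans ?_
          rw [norm_mul]
      _ ≤ Q + Q * (t * A) := add_le_add (hq1_le x hx)
          (mul_le_mul (hq_le x hx) (hz_le x hx) (norm_nonneg _) hQ0)
      _ = M1 := by rw [hM1_def]; ring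
  have hf2_le : ∀ x ∈ s, ‖f2 x‖ ≤ M2 := by
    intro x hx
    simp only [hf2_def]
    rw [norm_mul, hEnorm, mul_one]
    calc ‖q2 x + 2 * q1 x * (Complex.I * (t:ℂ) * p1 x) + q x * (Complex.I * (t:ℂ) * p2 x)
          + q x * (Complex.I * (t:ℂ) * p1 x) ^ 2‖
        ≤ ‖q2 x‖ + 2 * ‖q1 x‖ * ‖Complex.I * (t:ℂ) * p1 x‖
          + ‖q x‖ * ‖Complex.I * (t:ℂ) * p2 x‖
          + ‖q x‖ * ‖Complex.I * (t:ℂ) * p1 x‖ ^ 2 := by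
          refine (norm_add_le _ _).trans ?_
          refine add_le_add ((norm_add_le _ _).trans (add_le_add
            ((norm_add_le _ _).trans (add_le_add le_rfl ?_)) ?_)) ?_
          · rw [norm_mul, norm_mul, Complex.norm_ofNat]
          · rw [norm_mul]
          · rw [norm_mul, norm_pow]
      _ ≤ Q + 2 * Q * (t * A) + Q * (t * A) + Q * (t * A) ^ 2 := by
          refine add_le_add (add_le_add (add_le_add (hq2_le x hx) ?_) ?_) ?_
          · have h1 : 2 * ‖q1 x‖ * ‖Complex.I * (t:ℂ) * p1 x‖ ≤ 2 * Q * (t * A) := by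
              have := mul_le_mul (hq1_le x hx) (hz_le x hx) (norm_nonneg _) hQ0
              nlinarith [norm_nonneg (q1 x), norm_nonneg (Complex.I * (t:ℂ) * p1 x)]
            exact h1
          · exact mul_le_mul (hq_le x hx) (hw_le x hx) (norm_nonneg _) hQ0
          · exact mul_le_mul (hq_le x hx) (pow_le_pow_left₀ (norm_nonneg _) (hz_le x hx) 2)
              (by positivity) hQ0
      _ = M2 := by rw [hM2_def]; ring
  have hf1cont : ContinuousOn f1 s :=
    fun x hx => ((hf1d x hx).differentiableWithinAt).continuousWithinAt
  have hGcont : ContinuousOn G s :=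
    fun x hx => (((hFd x hx).differentiableWithinAt).continuousWithinAt).sub
      continuousWithinAt_const
  have hGd : ∀ x ∈ Set.Ioo a b, HasDerivAt G (f1 x) x := fun x hx =>
    ((hFd x (Set.Ioo_subset_Icc_self hx)).hasDerivAt
      (Icc_mem_nhds hx.1 hx.2)).sub_const _
  have hG0 : G 0 = 0 := sub_self _
  have hG_le : ∀ x ∈ s, ‖G x‖ ≤ M1 * |x| := by
    intro x hx
    have h1 := (convex_Icc a b).norm_image_sub_le_of_norm_hasDerivWithin_le
      hFd hf1_le h0s hx
    simpa [Real.norm_eq_abs] using h1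
  have hf1lip : ∀ x ∈ s, ∀ y ∈ s, ‖f1 x - f1 y‖ ≤ M2 * |x - y| := by
    intro x hx y hy
    have h1 := (convex_Icc a b).norm_image_sub_le_of_norm_hasDerivWithin_le
      hf1d hf2_le hy hx
    simpa [Real.norm_eq_abs] using h1
  -- the quotient function
  set h : ℝ → ℂ := fun η => if η = 0 then f1 0 else ((η:ℂ))⁻¹ * G η with hh_def
  set h' : ℝ → ℂ := fun η => ((η:ℂ))⁻¹ * f1 η - (((η:ℂ))^2)⁻¹ * G η with hh'_def
  have hh_le : ∀ x ∈ s, ‖h x‖ ≤ M1 := by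
    intro x hx
    by_cases hx0 : x = 0
    · subst hx0
      simp only [hh_def, if_pos rfl]
      exact hf1_le 0 h0s
    · simp only [hh_def, if_neg hx0]
      have hxne : |x| ≠ 0 := abs_ne_zero.mpr hx0
      calc ‖((x:ℂ))⁻¹ * G x‖ = |x|⁻¹ * ‖G x‖ := by
            rw [norm_mul, norm_inv, Complex.norm_real, Real.norm_eq_abs]
        _ ≤ |x|⁻¹ * (M1 * |x|) :=
            mul_le_mul_of_nonneg_left (hG_le x hx) (inv_nonneg.2 (abs_nonneg x))
        _ = M1 := by field_simp
  have hh'_le : ∀ x ∈ s, x ≠ 0 → ‖h' x‖ ≤ M2 := by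
    intro x hx hx0
    have hxC : (x:ℂ) ≠ 0 := Complex.ofReal_ne_zero.2 hx0
    have hxne : |x| ≠ 0 := abs_ne_zero.mpr hx0
    have hsub : Set.uIcc 0 x ⊆ s := by
      rw [hs_def, ← Set.uIcc_of_le hab.le]
      exact Set.uIcc_subset_uIcc (by rw [Set.uIcc_of_le hab.le]; exact h0s)
        (by rw [Set.uIcc_of_le hab.le]; exact hx)
    have hlin : ∀ u : ℝ, HasDerivAt (fun y : ℝ => (y:ℂ) * f1 x) (f1 x) u := by
      intro u
      have h0 : HasDerivAt (fun y : ℝ => ((y:ℝ):ℂ)) ((1:ℝ):ℂ) u :=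
        (hasDerivAt_id u).ofReal_comp
      simpa using h0.mul_const (f1 x)
    have hphi : ∀ u ∈ Set.uIcc 0 x, HasDerivWithinAt (fun y : ℝ => F y - (y:ℂ) * f1 x)
        (f1 u - f1 x) (Set.uIcc 0 x) u := fun u hu =>
      ((hFd u (hsub hu)).mono hsub).sub ((hlin u).hasDerivWithinAt)
    have habs : ∀ u ∈ Set.uIcc 0 x, |u - x| ≤ |x| := by
      intro u hu
      rcases le_total 0 x with hc | hc
      · rw [Set.uIcc_of_le hc] at hu
        rw [abs_of_nonpos (by linarith [hu.2]), abs_of_nonneg hc]; linarith [hu.1]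
      · rw [Set.uIcc_of_ge hc] at hu
        rw [abs_of_nonneg (by linarith [hu.1]), abs_of_nonpos hc]; linarith [hu.2]
    have hbd : ∀ u ∈ Set.uIcc 0 x, ‖f1 u - f1 x‖ ≤ M2 * |x| := fun u hu =>
      (hf1lip u (hsub hu) x hx).trans (mul_le_mul_of_nonneg_left (habs u hu) hM20)
    have hkey := Convex.norm_image_sub_le_of_norm_hasDerivWithin_le hphi hbd
      (convex_uIcc 0 x) Set.left_mem_uIcc Set.right_mem_uIcc
    have hkey2 : ‖G x - (x:ℂ) * f1 x‖ ≤ M2 * |x| * |x| := by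
      have heq : G x - (x:ℂ) * f1 x
          = (F x - (x:ℂ) * f1 x) - (F 0 - ((0:ℝ):ℂ) * f1 x) := by
        simp only [hG_def]; push_cast; ring
      rw [heq]
      simpa [Real.norm_eq_abs] using hkey
    have hform : h' x = (((x:ℂ))^2)⁻¹ * ((x:ℂ) * f1 x - G x) := by
      simp only [hh'_def]; field_simp
    rw [hform, norm_mul, norm_inv, norm_pow, Complex.norm_real, Real.norm_eq_abs,
      norm_sub_rev]
    calc (|x| ^ 2)⁻¹ * ‖G x - (x:ℂ) * f1 x‖ ≤ (|x| ^ 2)⁻¹ * (M2 * |x| * |x|) :=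
          mul_le_mul_of_nonneg_left hkey2 (by positivity)
      _ = M2 := by
          have h2 : |x| ^ 2 ≠ 0 := pow_ne_zero 2 hxne
          rw [show M2 * |x| * |x| = M2 * |x| ^ 2 by ring, sq_abs,
            show (x ^ 2)⁻¹ * (M2 * x ^ 2) = M2 * (x ^ 2 * (x ^ 2)⁻¹) by ring,
            mul_inv_cancel₀ (pow_ne_zero 2 hx0), mul_one]
  have hh_deriv : ∀ x ∈ Set.Ioo a b, x ≠ 0 → HasDerivAt h (h' x) x := by
    intro x hx hx0
    have hxC : (x:ℂ) ≠ 0 := Complex.ofReal_ne_zero.2 hx0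
    have hco : HasDerivAt (fun y : ℝ => ((y:ℝ):ℂ)) ((1:ℝ):ℂ) x :=
      (hasDerivAt_id x).ofReal_comp
    have hinvC : HasDerivAt (fun z : ℂ => z⁻¹) (-(((x:ℂ))^2)⁻¹) ((x:ℂ)) :=
      hasDerivAt_inv hxC
    have hinv : HasDerivAt (fun y : ℝ => ((y:ℂ))⁻¹) (-(((x:ℂ))^2)⁻¹) x := by
      have := hinvC.comp x hco
      rw [Complex.ofReal_one, mul_one] at this
      exact this
    have hmul := hinv.mul (hGd x hx)
    have heval : -(((x:ℂ))^2)⁻¹ * G x + ((x:ℂ))⁻¹ * f1 x = h' x := by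
      simp only [hh'_def]; ring
    have hd : HasDerivAt (fun y : ℝ => ((y:ℂ))⁻¹ * G y) (h' x) x := by
      rw [← heval]; exact hmul
    refine hd.congr_of_eventuallyEq ?_
    filter_upwards [isOpen_compl_singleton.mem_nhds (by simpa using hx0 :
      x ∈ ({(0:ℝ)}ᶜ : Set ℝ))] with y hy
    simp only [hh_def, if_neg (by simpa using hy : y ≠ 0)]
  have hh_cont : ContinuousOn h s := by
    intro x hx
    by_cases hx0 : x = 0
    · subst hx0
      have hslope := hasDerivAt_iff_tendsto_slope.mp (hGd 0 ⟨ha, hb⟩)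
      have hteq : ∀ᶠ y in nhdsWithin 0 {(0:ℝ)}ᶜ, slope G 0 y = h y := by
        filter_upwards [self_mem_nhdsWithin] with y hy
        have hy0 : y ≠ 0 := by simpa using hy
        rw [slope_def_module]
        simp only [hh_def, if_neg hy0, hG0, sub_zero, Complex.real_smul,
          Complex.ofReal_inv]
      have htendsto : Filter.Tendsto h (nhdsWithin 0 {(0:ℝ)}ᶜ) (nhds (f1 0)) :=
        hslope.congr' hteq
      have hh0 : h 0 = f1 0 := by simp [hh_def]
      have hca : ContinuousAt h 0 := continuousWithinAt_compl_self.mp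
        (by rw [ContinuousWithinAt, hh0]; exact htendsto)
      exact hca.continuousWithinAt
    · have hg : ContinuousWithinAt (fun y : ℝ => ((y:ℂ))⁻¹ * G y) s x :=
        (((Complex.continuous_ofReal.continuousAt).inv₀
          (Complex.ofReal_ne_zero.2 hx0)).continuousWithinAt).mul (hGcont x hx)
      refine hg.congr_of_eventuallyEq ?_ (by simp [hh_def, if_neg hx0])
      refine Filter.eventuallyEq_of_mem (mem_nhdsWithin_of_mem_nhds
        (isOpen_compl_singleton.mem_nhds (by simpa using hx0 :
          x ∈ ({(0:ℝ)}ᶜ : Set ℝ)))) fun y hy => ?_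
      simp only [hh_def, if_neg (by simpa using hy : y ≠ 0)]
  -- the oscillating kernel
  set K : ℝ → ℂ := fun η => Complex.exp (-Complex.I * (l : ℂ) * (η : ℂ)^2 / 2) with hK_def
  set W : ℝ → ℂ := fun η => (Complex.I / l) * K η with hW_def
  have hlC : (l:ℂ) ≠ 0 := Complex.ofReal_ne_zero.2 hl.ne'
  have hKnorm : ∀ η : ℝ, ‖K η‖ = 1 := by
    intro η
    have harg : -Complex.I * (l:ℂ) * (η:ℂ)^2 / 2 = ((-(l * η^2)/2 : ℝ) : ℂ) * Complex.I := by
      push_cast; ring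
    simp only [hK_def]
    rw [harg, Complex.norm_exp_ofReal_mul_I]
  have hKcont : Continuous K := by
    simp only [hK_def]; fun_prop
  have hWcont : Continuous W := by
    simp only [hW_def]; exact continuous_const.mul hKcont
  have hWnorm : ∀ η : ℝ, ‖W η‖ = 1 / l := by
    intro η
    simp only [hW_def]
    rw [norm_mul, hKnorm, mul_one, norm_div, Complex.norm_I, Complex.norm_real,
      Real.norm_eq_abs, abs_of_pos hl]
  have hKd : ∀ η : ℝ, HasDerivAt K (K η * (-Complex.I * l * η)) η := by
    intro η
    have h1 : HasDerivAt (fun y : ℝ => (y^2 : ℝ)) (2 * η) η := by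
      simpa using hasDerivAt_pow 2 η
    have h2 : HasDerivAt (fun y : ℝ => ((y^2 : ℝ) : ℂ)) (((2 * η : ℝ)) : ℂ) η :=
      h1.ofReal_comp
    have hfun : (fun y : ℝ => -Complex.I * (l:ℂ) * (y:ℂ)^2 / 2)
        = fun y : ℝ => (-Complex.I * (l:ℂ) / 2) * ((y^2 : ℝ) : ℂ) := by
      funext y; push_cast; ring
    have h3 : HasDerivAt (fun y : ℝ => -Complex.I * (l:ℂ) * (y:ℂ)^2 / 2)
        (-Complex.I * l * η) η := by
      rw [hfun]
      have h4 := h2.const_mul (-Complex.I * (l:ℂ) / 2)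
      convert h4 using 1
      · rfl
      push_cast; ring
    have h5 := h3.cexp
    simp only [hK_def]
    exact h5
  have hWd : ∀ η : ℝ, HasDerivAt W ((η:ℂ) * K η) η := by
    intro η
    have h1 := (hKd η).const_mul (Complex.I / l)
    have heq : Complex.I / l * (K η * (-Complex.I * l * η)) = (η:ℂ) * K η := by
      field_simp
      ring_nf
      simp [Complex.I_sq]
    have h2 : HasDerivAt (fun y => Complex.I / (l:ℂ) * K y) ((η:ℂ) * K η) η := by
      rw [← heq]; exact h1
    exact h2
  have hKGh : ∀ η : ℝ, K η * G η = ((η:ℂ) * K η) * h η := by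
    intro η
    by_cases hη : η = 0
    · subst hη
      simp [hG0]
    · have hGh : G η = (η:ℂ) * h η := by
        simp only [hh_def, if_neg hη]
        rw [← mul_assoc, mul_inv_cancel₀ (Complex.ofReal_ne_zero.2 hη), one_mul]
      rw [hGh]; ring
  -- integration by parts on each side
  have key : ∀ c d : ℝ, c ≤ d → Set.Icc c d ⊆ s → Set.Ioo c d ⊆ Set.Ioo a b \ {0} →
      (0:ℝ) ∈ Set.Icc c d →
      ‖∫ η in c..d, K η * G η‖ ≤ (2 * M1 + (d - c) * M2) / l := by
    intro c d hcd hsub hsub2 h0cd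
    have hIoos : Set.Ioo c d ⊆ s := fun y hy => hsub (Set.Ioo_subset_Icc_self hy)
    have hc_s : c ∈ s := hsub ⟨le_refl c, hcd⟩
    have hd_s : d ∈ s := hsub ⟨hcd, le_refl d⟩
    have hrw : ∫ η in c..d, K η * G η = ∫ η in c..d, ((η:ℂ) * K η) * h η :=
      intervalIntegral.integral_congr fun η _ => hKGh η
    have hcont1 : ContinuousOn (fun η : ℝ => ((η:ℂ) * K η) * h η) (Set.Icc c d) :=
      ((Complex.continuous_ofReal.continuousOn.mul hKcont.continuousOn).mul
        (hh_cont.mono hsub))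
    have hi1 : IntervalIntegrable (fun η => ((η:ℂ) * K η) * h η) volume c d := by
      apply ContinuousOn.intervalIntegrable
      rw [Set.uIcc_of_le hcd]; exact hcont1
    have hne : ∀ y ∈ Set.Ioo c d, (y:ℂ) ≠ 0 := fun y hy =>
      Complex.ofReal_ne_zero.2 (by simpa using (hsub2 hy).2)
    have hi2 : IntervalIntegrable (fun η => W η * h' η) volume c d := by
      rw [intervalIntegrable_iff_integrableOn_Ioo_of_le hcd]
      have hmeas : AEStronglyMeasurable (fun η => W η * h' η)
          (volume.restrict (Set.Ioo c d)) := by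
        apply ContinuousOn.aestronglyMeasurable _ measurableSet_Ioo
        apply ContinuousOn.mul hWcont.continuousOn
        exact ((Complex.continuous_ofReal.continuousOn.inv₀ hne).mul
          (hf1cont.mono hIoos)).sub
          (((Complex.continuous_ofReal.continuousOn.pow 2).inv₀
            (fun y hy => pow_ne_zero 2 (hne y hy))).mul (hGcont.mono hIoos))
      apply Integrable.mono' (g := fun _ => M2 / l)
        (integrableOn_const measure_Ioo_lt_top.ne) hmeas
      filter_upwards [ae_restrict_mem measurableSet_Ioo] with y hy
      rw [norm_mul, hWnorm]
      calc 1 / l * ‖h' y‖ ≤ 1 / l * M2 :=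
            mul_le_mul_of_nonneg_left
              (hh'_le y (hIoos hy) (by simpa using (hsub2 hy).2)) (by positivity)
        _ = M2 / l := by ring
    have hibp := ibp_aux hcd W h (fun η => (η:ℂ) * K η) h'
      (fun x _ => hWd x)
      (fun x hx => hh_deriv x (hsub2 hx).1 (by simpa using (hsub2 hx).2))
      hWcont.continuousOn (hh_cont.mono hsub) hi1 hi2
    rw [hrw, hibp]
    have hWh : ∀ x ∈ s, ‖W x * h x‖ ≤ 1 / l * M1 := by
      intro x hx
      rw [norm_mul, hWnorm]
      exact mul_le_mul_of_nonneg_left (hh_le x hx) (by positivity)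
    have hintb : ‖∫ η in c..d, W η * h' η‖ ≤ M2 / l * |d - c| := by
      apply intervalIntegral.norm_integral_le_of_norm_le_const
      intro y hy
      rw [Set.uIoc_of_le hcd] at hy
      by_cases hy0 : y = 0
      · subst hy0
        have : h' 0 = 0 := by
          simp only [hh'_def]
          norm_num
        rw [this, mul_zero, norm_zero]
        positivity
      · have hys : y ∈ s := hsub ⟨hy.1.le, hy.2⟩
        rw [norm_mul, hWnorm]
        calc 1 / l * ‖h' y‖ ≤ 1 / l * M2 :=
              mul_le_mul_of_nonneg_left (hh'_le y hys hy0) (by positivity)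
          _ = M2 / l := by ring
    calc ‖W d * h d - W c * h c - ∫ η in c..d, W η * h' η‖
        ≤ ‖W d * h d - W c * h c‖ + ‖∫ η in c..d, W η * h' η‖ := norm_sub_le _ _
      _ ≤ (‖W d * h d‖ + ‖W c * h c‖) + M2 / l * |d - c| :=
          add_le_add (norm_sub_le _ _) hintb
      _ ≤ (1 / l * M1 + 1 / l * M1) + M2 / l * (d - c) := by
          rw [abs_of_nonneg (sub_nonneg.2 hcd)]
          exact add_le_add (add_le_add (hWh d hd_s) (hWh c hc_s)) le_rfl
      _ = (2 * M1 + (d - c) * M2) / l := by field_simp; ring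
  have hint1 : IntervalIntegrable (fun η => K η * G η) volume a 0 := by
    apply ContinuousOn.intervalIntegrable
    rw [Set.uIcc_of_le ha.le]
    exact hKcont.continuousOn.mul
      (hGcont.mono fun x hx => ⟨hx.1, hx.2.trans hb.le⟩)
  have hint2 : IntervalIntegrable (fun η => K η * G η) volume 0 b := by
    apply ContinuousOn.intervalIntegrable
    rw [Set.uIcc_of_le hb.le]
    exact hKcont.continuousOn.mul
      (hGcont.mono fun x hx => ⟨ha.le.trans hx.1, hx.2⟩)
  have hbound1 : ‖∫ η in a..0, K η * G η‖ ≤ (2 * M1 + (0 - a) * M2) / l :=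
    key a 0 ha.le (fun x hx => ⟨hx.1, hx.2.trans hb.le⟩)
      (fun x hx => ⟨⟨hx.1, hx.2.trans hb⟩, ne_of_lt hx.2⟩) ⟨ha.le, le_refl 0⟩
  have hbound2 : ‖∫ η in (0:ℝ)..b, K η * G η‖ ≤ (2 * M1 + (b - 0) * M2) / l :=
    key 0 b hb.le (fun x hx => ⟨ha.le.trans hx.1, hx.2⟩)
      (fun x hx => ⟨⟨ha.trans hx.1, hx.2⟩, ne_of_gt hx.1⟩) ⟨le_refl 0, hb.le⟩
  have hintegrand : ∀ η : ℝ, Complex.exp (-Complex.I * (l : ℂ) * (η : ℂ)^2 / 2) *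
          (q η * Complex.exp (Complex.I * (t : ℂ) * (p η : ℂ)) -
           q 0 * Complex.exp (Complex.I * (t : ℂ) * (p 0 : ℂ))) = K η * G η := fun η => rfl
  calc ‖∫ η in a..b, Complex.exp (-Complex.I * (l : ℂ) * (η : ℂ)^2 / 2) *
          (q η * Complex.exp (Complex.I * (t : ℂ) * (p η : ℂ)) -
           q 0 * Complex.exp (Complex.I * (t : ℂ) * (p 0 : ℂ)))‖
      = ‖∫ η in a..b, K η * G η‖ := by simp only [hintegrand]
    _ ≤ 4 * (1 + b - a) * (1 + A)^3 * Q * (1 + t)^2 / l := ?_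
  rw [← intervalIntegral.integral_add_adjacent_intervals hint1 hint2]
  calc ‖(∫ η in a..0, K η * G η) + ∫ η in (0:ℝ)..b, K η * G η‖
        ≤ ‖∫ η in a..0, K η * G η‖ + ‖∫ η in (0:ℝ)..b, K η * G η‖ := norm_add_le _ _
      _ ≤ (2 * M1 + (0 - a) * M2) / l + (2 * M1 + (b - 0) * M2) / l :=
          add_le_add hbound1 hbound2
      _ ≤ 4 * (1 + b - a) * (1 + A)^3 * Q * (1 + t)^2 / l := by
          rw [← add_div]
          gcongr
          rw [hM1_def, hM2_def]
          exact final_arith ha hb ht hA0 hQ0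
end

section
/- Let λ > 1 and σ ∈ ℝ with |σ| ≤ 1, and let F : ℝ → ℂ be C² with ‖F‖_{C²} < ∞ (bounded together with its first two derivatives). Define S₁(y) = √|y| for y > 0 and S₁(y) = −i√|y| for y ≤ 0. Then for any A < −3, |∫_A^{-2} e^{-i(y² + 2yσ)/2} S₁(y) F(y) dy| ≤ C‖F‖_{C²} for an absolute constant C independent of A, σ, λ, F. -/
open MeasureTheory Real

/-- `S₁(y) = √|y|` for `y > 0` and `S₁(y) = -i√|y|` for `y ≤ 0`. -/
noncomputable def S1 (s : ℝ) : ℂ :=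
  if 0 < s then (Real.sqrt |s| : ℂ) else -Complex.I * (Real.sqrt |s| : ℂ)

/-- The global `C²` norm of `F : ℝ → ℂ`: supremum of `F` and its first two derivatives. -/
noncomputable def C2normG (F : ℝ → ℂ) : ℝ :=
  ⨆ i : Fin 3, ⨆ x : ℝ, ‖iteratedDeriv i F x‖

set_option linter.unusedSectionVars false
set_option linter.unreachableTactic false
set_option linter.unusedTactic false

noncomputable def sC (y : ℝ) : ℂ := (Real.sqrt (-y) : ℂ)
noncomputable def dC (σ y : ℝ) : ℂ := (y : ℂ) + (σ : ℂ)
noncomputable def phC (σ y : ℝ) : ℂ :=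
  Complex.exp (-Complex.I * ((y : ℂ)^2 + 2 * (y : ℂ) * (σ : ℂ)) / 2)
noncomputable def gg (σ : ℝ) (F : ℝ → ℂ) (y : ℝ) : ℂ := sC y * F y / dC σ y
noncomputable def gg1 (σ : ℝ) (F : ℝ → ℂ) (y : ℝ) : ℂ :=
  (-(1/(2*sC y)) * F y + sC y * deriv F y)/dC σ y - sC y * F y/(dC σ y)^2
noncomputable def gg2 (σ : ℝ) (F : ℝ → ℂ) (y : ℝ) : ℂ :=
  (-(1/(4*(sC y)^3)) * F y - (1/(sC y)) * deriv F y + sC y * deriv (deriv F) y)/dC σ y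
  - 2*(-(1/(2*sC y)) * F y + sC y * deriv F y)/(dC σ y)^2 + 2*(sC y * F y)/(dC σ y)^3
noncomputable def hh (σ : ℝ) (F : ℝ → ℂ) (y : ℝ) : ℂ := Complex.I * gg1 σ F y / dC σ y
noncomputable def hh1 (σ : ℝ) (F : ℝ → ℂ) (y : ℝ) : ℂ :=
  Complex.I * gg2 σ F y / dC σ y - Complex.I * gg1 σ F y / (dC σ y)^2

variable {σ y : ℝ} {F : ℝ → ℂ}

lemma sqrtneg_hasDeriv (hy : y < 0) :
    HasDerivAt (fun x : ℝ => Real.sqrt (-x)) (-(1/(2*Real.sqrt (-y)))) y := by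
  have h := (Real.hasDerivAt_sqrt (show -y ≠ 0 by linarith)).comp y (hasDerivAt_neg y)
  simp only [Function.comp_def] at h
  refine h.congr_deriv ?_; symm
  ring

lemma sC_ne (hy : y < 0) : sC y ≠ 0 := by
  unfold sC
  exact Complex.ofReal_ne_zero.mpr (ne_of_gt (Real.sqrt_pos.mpr (by linarith)))

lemma sC_hasDeriv (hy : y < 0) : HasDerivAt sC (-(1/(2*sC y))) y := by
  have h := (sqrtneg_hasDeriv hy).ofReal_comp
  unfold sC
  refine h.congr_deriv ?_; symm
  push_cast
  ring

lemma dC_hasDeriv : HasDerivAt (dC σ) 1 y := by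
  have h := ((hasDerivAt_id y).ofReal_comp).add_const (σ : ℂ)
  unfold dC
  simpa using h

lemma phC_hasDeriv : HasDerivAt (phC σ) (-Complex.I * dC σ y * phC σ y) y := by
  have h1 : HasDerivAt (fun z : ℂ => -Complex.I * (z^2 + 2 * z * (σ:ℂ)) / 2)
      (-Complex.I * (2*(y:ℂ) + 2*(σ:ℂ)) / 2) (y:ℂ) := by
    have ha : HasDerivAt (fun z : ℂ => z^2 + 2 * z * (σ:ℂ)) (2*(y:ℂ) + 2*(σ:ℂ)) (y:ℂ) := by
      have := (hasDerivAt_pow 2 (y:ℂ)).add (((hasDerivAt_id (y:ℂ)).const_mul ((2:ℂ)*(σ:ℂ))))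
      simp only [id_eq] at this
      have hfun : (fun z : ℂ => z^2 + 2*(σ:ℂ)*z) = fun z : ℂ => z^2 + 2 * z * (σ:ℂ) := by
        funext z; ring
      simp only [Pi.add_def] at this
      rw [hfun] at this
      refine this.congr_deriv ?_; symm
      push_cast
      ring
    exact (ha.const_mul (-Complex.I)).div_const 2
  have h3 := (h1.comp_ofReal).cexp
  unfold phC dC
  refine h3.congr_deriv ?_; symm
  ring

lemma gg_hasDeriv (hy : y < 0) (hd : dC σ y ≠ 0) (hF : HasDerivAt F (deriv F y) y) :
    HasDerivAt (gg σ F) (gg1 σ F y) y := by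
  unfold gg gg1
  have h := ((sC_hasDeriv hy).mul hF).div dC_hasDeriv hd
  refine h.congr_deriv ?_; symm
  have hs := sC_ne hy
  simp only [Pi.mul_apply]
  field_simp

lemma gg1_hasDeriv (hy : y < 0) (hd : dC σ y ≠ 0) (hF : HasDerivAt F (deriv F y) y)
    (hF1 : HasDerivAt (deriv F) (deriv (deriv F) y) y) :
    HasDerivAt (gg1 σ F) (gg2 σ F y) y := by
  have hs := sC_ne hy
  have h2s : (2 : ℂ) * sC y ≠ 0 := by simpa using hs
  have hinv : HasDerivAt (fun y => -(1/(2*sC y)))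
      (-((0*(2*sC y) - 1*(2*(-(1/(2*sC y)))))/(2*sC y)^2)) y :=
    (((hasDerivAt_const y (1:ℂ)).div ((sC_hasDeriv hy).const_mul 2) h2s)).neg
  have hnum : HasDerivAt (fun y => -(1/(2*sC y)) * F y + sC y * deriv F y)
      ((-((0*(2*sC y) - 1*(2*(-(1/(2*sC y)))))/(2*sC y)^2)) * F y + (-(1/(2*sC y))) * deriv F y
        + ((-(1/(2*sC y))) * deriv F y + sC y * deriv (deriv F) y)) y :=
    (hinv.mul hF).add ((sC_hasDeriv hy).mul hF1)
  have hd2 : HasDerivAt (fun y => (dC σ y)^2) (2 * dC σ y) y := by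
    have h := (dC_hasDeriv (σ := σ) (y := y)).mul (dC_hasDeriv (σ := σ) (y := y))
    have hfun : (fun y => dC σ y * dC σ y) = fun y => (dC σ y)^2 := by
      funext x; ring
    simp only [Pi.mul_def] at h
    rw [hfun] at h
    refine h.congr_deriv ?_; symm
    ring
  have hq : HasDerivAt (fun y => sC y * F y)
      ((-(1/(2*sC y))) * F y + sC y * deriv F y) y := (sC_hasDeriv hy).mul hF
  have h := (hnum.div dC_hasDeriv hd).sub (hq.div hd2 (pow_ne_zero 2 hd))
  unfold gg1 gg2
  refine h.congr_deriv ?_; symm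
  field_simp
  ring_nf

lemma hh_hasDeriv (hy : y < 0) (hd : dC σ y ≠ 0) (hF : HasDerivAt F (deriv F y) y)
    (hF1 : HasDerivAt (deriv F) (deriv (deriv F) y) y) :
    HasDerivAt (hh σ F) (hh1 σ F y) y := by
  have h := ((gg1_hasDeriv hy hd hF hF1).const_mul Complex.I).div dC_hasDeriv hd
  unfold hh hh1
  refine h.congr_deriv ?_; symm
  field_simp

lemma S1_eq (hy : y < 0) : S1 y = -Complex.I * sC y := by
  unfold S1 sC
  rw [if_neg (by linarith), abs_of_neg hy]

lemma Phi_hasDeriv (hy : y < 0) (hd : dC σ y ≠ 0) (hF : HasDerivAt F (deriv F y) y)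
    (hF1 : HasDerivAt (deriv F) (deriv (deriv F) y) y) :
    HasDerivAt (fun x => phC σ x * (gg σ F x - hh σ F x))
      (phC σ y * S1 y * F y - phC σ y * hh1 σ F y) y := by
  have h := (phC_hasDeriv (σ := σ) (y := y)).mul ((gg_hasDeriv hy hd hF).sub (hh_hasDeriv hy hd hF hF1))
  refine h.congr_deriv ?_; symm
  simp only [Pi.sub_apply]
  rw [S1_eq hy]
  unfold gg hh hh1
  field_simp
  linear_combination (-(phC σ y * dC σ y ^ 2 * gg1 σ F y)) * Complex.I_sq

lemma norm_sC : ‖sC y‖ = Real.sqrt (-y) := by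
  unfold sC
  rw [Complex.norm_real, Real.norm_eq_abs, abs_of_nonneg (Real.sqrt_nonneg _)]

lemma norm_phC (σ y : ℝ) : ‖phC σ y‖ = 1 := by
  unfold phC
  have h : (-Complex.I * ((y : ℂ)^2 + 2 * (y : ℂ) * (σ : ℂ)) / 2)
      = Complex.I * ((-(y^2 + 2*y*σ)/2 : ℝ) : ℂ) := by push_cast; ring
  rw [h, Complex.norm_exp]
  norm_num [Complex.mul_re, Complex.mul_im, ← Complex.ofReal_pow]

lemma dC_eq : dC σ y = ((y + σ : ℝ) : ℂ) := by unfold dC; push_cast; ring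

lemma dC_ne (hσ : |σ| ≤ 1) (hy : y ≤ -2) : dC σ y ≠ 0 := by
  rw [dC_eq]
  have := abs_le.mp hσ
  exact Complex.ofReal_ne_zero.mpr (by linarith)

lemma norm_dC_ge (hσ : |σ| ≤ 1) (hy : y ≤ -2) : -y - 1 ≤ ‖dC σ y‖ := by
  rw [dC_eq, Complex.norm_real, Real.norm_eq_abs]
  have := abs_le.mp hσ
  rw [abs_of_neg (by linarith)]
  linarith

lemma s_facts (hy : y ≤ -2) :
    0 < Real.sqrt (-y) ∧ (Real.sqrt (-y))^2 = -y ∧ 1 ≤ Real.sqrt (-y) := by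
  have hyy : (2:ℝ) ≤ -y := by linarith
  have h0 : (0:ℝ) < -y := by linarith
  have hs0 : 0 < Real.sqrt (-y) := Real.sqrt_pos.mpr h0
  have hs2 : (Real.sqrt (-y))^2 = -y := Real.sq_sqrt (le_of_lt h0)
  refine ⟨hs0, hs2, ?_⟩
  nlinarith

lemma normD_ge (hσ : |σ| ≤ 1) (hy : y ≤ -2) : (Real.sqrt (-y))^2/2 ≤ ‖dC σ y‖ := by
  obtain ⟨hs0, hs2, hs1⟩ := s_facts hy
  have := norm_dC_ge hσ hy
  nlinarith

section Bounds

variable {M : ℝ} (hσ : |σ| ≤ 1) (hy : y ≤ -2) (hM : 0 ≤ M)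
  (h0 : ‖F y‖ ≤ M) (h1 : ‖deriv F y‖ ≤ M) (h2 : ‖deriv (deriv F) y‖ ≤ M)
include hσ hy hM h0 h1 h2

lemma bound_gg : ‖gg σ F y‖ ≤ 2*M := by
  obtain ⟨hs0, hs2, hs1⟩ := s_facts hy
  have hD := normD_ge hσ hy
  have hD0 : (0:ℝ) < ‖dC σ y‖ := lt_of_lt_of_le (by positivity) hD
  set s := Real.sqrt (-y) with hsdef
  have hs2' : (2:ℝ) ≤ s^2 := by rw [hs2]; linarith
  have e : ‖gg σ F y‖ = s * ‖F y‖ / ‖dC σ y‖ := by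
    unfold gg; rw [norm_div, norm_mul, norm_sC]
  rw [e]
  calc s * ‖F y‖ / ‖dC σ y‖
      ≤ s * M / (s^2/2) := by gcongr
    _ ≤ 2*M := by
        have hnum : 0 ≤ M*(s-1) := mul_nonneg hM (by linarith)
        have e2 : 2*M - s*M/(s^2/2) = 2*M*(s-1)/s := by field_simp
        nlinarith [div_nonneg (mul_nonneg (by linarith : (0:ℝ) ≤ 2*M) (by linarith : (0:ℝ) ≤ s-1)) hs0.le, e2]

lemma bound_gg1 : ‖gg1 σ F y‖ ≤ 5*M/Real.sqrt (-y) := by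
  obtain ⟨hs0, hs2, hs1⟩ := s_facts hy
  have hD := normD_ge hσ hy
  have hD0 : (0:ℝ) < ‖dC σ y‖ := lt_of_lt_of_le (by positivity) hD
  have h2C : ‖(2:ℂ)‖ = 2 := by norm_num
  set s := Real.sqrt (-y) with hsdef
  have hs2' : (2:ℝ) ≤ s^2 := by rw [hs2]; linarith
  have enum : ‖-(1/(2*sC y)) * F y + sC y * deriv F y‖ ≤ 1/(2*s)*M + s*M := by
    refine (norm_add_le _ _).trans ?_
    rw [norm_mul, norm_mul, norm_neg, norm_div, norm_one, norm_mul, h2C, norm_sC]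
    gcongr
  calc ‖gg1 σ F y‖
      ≤ ‖(-(1/(2*sC y)) * F y + sC y * deriv F y)/dC σ y‖ + ‖sC y * F y/(dC σ y)^2‖ := by
        unfold gg1; exact norm_sub_le _ _
    _ = ‖-(1/(2*sC y)) * F y + sC y * deriv F y‖/‖dC σ y‖ + s * ‖F y‖/‖dC σ y‖^2 := by
        rw [norm_div, norm_div, norm_mul, norm_pow, norm_sC]
    _ ≤ (1/(2*s)*M + s*M)/(s^2/2) + s*M/(s^2/2)^2 := by
        gcongr <;> first | exact norm_nonneg _ | positivity
    _ = 2*M/s + 5*M/s^3 := by field_simp; ring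
    _ ≤ 5*M/s := by
        have e2 : 5*M/s - (2*M/s + 5*M/s^3) = M*(3*s^2-5)/s^3 := by field_simp; ring
        have hnum : 0 ≤ M*(3*s^2-5) := mul_nonneg hM (by linarith)
        nlinarith [div_nonneg hnum (by positivity : (0:ℝ) ≤ s^3), e2]

lemma bound_hh : ‖hh σ F y‖ ≤ 5*M := by
  obtain ⟨hs0, hs2, hs1⟩ := s_facts hy
  have hD := normD_ge hσ hy
  have hD0 : (0:ℝ) < ‖dC σ y‖ := lt_of_lt_of_le (by positivity) hD
  have hg1 := bound_gg1 hσ hy hM h0 h1 h2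
  set s := Real.sqrt (-y) with hsdef
  have hs2' : (2:ℝ) ≤ s^2 := by rw [hs2]; linarith
  have hs3 : (2:ℝ) ≤ s^3 := by nlinarith [mul_nonneg (sub_nonneg.mpr hs1) (sq_nonneg s)]
  have e : ‖hh σ F y‖ = ‖gg1 σ F y‖/‖dC σ y‖ := by
    unfold hh; rw [norm_div, norm_mul, Complex.norm_I, one_mul]
  rw [e]
  calc ‖gg1 σ F y‖/‖dC σ y‖ ≤ (5*M/s)/(s^2/2) := by
        gcongr
    _ = 10*M/s^3 := by field_simp; ring
    _ ≤ 5*M := by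
        have e2 : 5*M - 10*M/s^3 = 5*M*(s^3-2)/s^3 := by field_simp; ring
        nlinarith [div_nonneg (mul_nonneg (by linarith : (0:ℝ) ≤ 5*M) (by linarith : (0:ℝ) ≤ s^3-2)) (by positivity : (0:ℝ) ≤ s^3), e2]

lemma bound_gg2 : ‖gg2 σ F y‖ ≤ 2*M/Real.sqrt (-y) + 21*M/(Real.sqrt (-y))^3 := by
  obtain ⟨hs0, hs2, hs1⟩ := s_facts hy
  have hD := normD_ge hσ hy
  have hD0 : (0:ℝ) < ‖dC σ y‖ := lt_of_lt_of_le (by positivity) hD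
  have h2C : ‖(2:ℂ)‖ = 2 := by norm_num
  have h4C : ‖(4:ℂ)‖ = 4 := by norm_num
  set s := Real.sqrt (-y) with hsdef
  have hs2' : (2:ℝ) ≤ s^2 := by rw [hs2]; linarith
  have enum1 : ‖-(1/(4*(sC y)^3)) * F y - (1/(sC y)) * deriv F y + sC y * deriv (deriv F) y‖
      ≤ 1/(4*s^3)*M + 1/s*M + s*M := by
    refine (norm_add_le _ _).trans ?_
    refine add_le_add ((norm_sub_le _ _).trans ?_) ?_
    · rw [norm_mul, norm_mul, norm_neg, norm_div, norm_one, norm_mul, h4C, norm_pow,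
        norm_div, norm_one, norm_sC]
      gcongr
    · rw [norm_mul, norm_sC]; gcongr
  have enum2 : ‖2*(-(1/(2*sC y)) * F y + sC y * deriv F y)‖ ≤ 2*(1/(2*s)*M + s*M) := by
    rw [norm_mul, h2C]
    gcongr
    refine (norm_add_le _ _).trans ?_
    rw [norm_mul, norm_mul, norm_neg, norm_div, norm_one, norm_mul, h2C, norm_sC]
    gcongr
  have enum3 : ‖2*(sC y * F y)‖ ≤ 2*(s*M) := by
    rw [norm_mul, h2C, norm_mul, norm_sC]
    gcongr
  calc ‖gg2 σ F y‖
      ≤ ‖(-(1/(4*(sC y)^3)) * F y - (1/(sC y)) * deriv F y + sC y * deriv (deriv F) y)/dC σ y‖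
        + ‖2*(-(1/(2*sC y)) * F y + sC y * deriv F y)/(dC σ y)^2‖
        + ‖2*(sC y * F y)/(dC σ y)^3‖ := by
        unfold gg2
        exact (norm_add_le _ _).trans (add_le_add_left (norm_sub_le _ _) _)
    _ = ‖-(1/(4*(sC y)^3)) * F y - (1/(sC y)) * deriv F y + sC y * deriv (deriv F) y‖/‖dC σ y‖
        + ‖2*(-(1/(2*sC y)) * F y + sC y * deriv F y)‖/‖dC σ y‖^2
        + ‖2*(sC y * F y)‖/‖dC σ y‖^3 := by
        rw [norm_div, norm_div, norm_div, norm_pow, norm_pow]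
    _ ≤ (1/(4*s^3)*M + 1/s*M + s*M)/(s^2/2) + (2*(1/(2*s)*M + s*M))/(s^2/2)^2
        + (2*(s*M))/(s^2/2)^3 := by
        gcongr <;> first | exact enum1 | exact enum2 | exact enum3 | positivity
    _ = 2*M/s + 10*M/s^3 + (41/2)*M/s^5 := by field_simp; ring
    _ ≤ 2*M/s + 21*M/s^3 := by
        have e2 : 2*M/s + 21*M/s^3 - (2*M/s + 10*M/s^3 + (41/2)*M/s^5)
            = M*(11*s^2 - 41/2)/s^5 := by field_simp; ring
        have hnum : 0 ≤ M*(11*s^2 - 41/2) := mul_nonneg hM (by linarith)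
        nlinarith [div_nonneg hnum (by positivity : (0:ℝ) ≤ s^5), e2]

lemma bound_hh1 : ‖hh1 σ F y‖ ≤ 35*M/(Real.sqrt (-y))^3 := by
  obtain ⟨hs0, hs2, hs1⟩ := s_facts hy
  have hD := normD_ge hσ hy
  have hD0 : (0:ℝ) < ‖dC σ y‖ := lt_of_lt_of_le (by positivity) hD
  have hg1 := bound_gg1 hσ hy hM h0 h1 h2
  have hg2 := bound_gg2 hσ hy hM h0 h1 h2
  set s := Real.sqrt (-y) with hsdef
  have hs2' : (2:ℝ) ≤ s^2 := by rw [hs2]; linarith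
  calc ‖hh1 σ F y‖
      ≤ ‖Complex.I * gg2 σ F y / dC σ y‖ + ‖Complex.I * gg1 σ F y / (dC σ y)^2‖ := by
        unfold hh1; exact norm_sub_le _ _
    _ = ‖gg2 σ F y‖/‖dC σ y‖ + ‖gg1 σ F y‖/‖dC σ y‖^2 := by
        rw [norm_div, norm_div, norm_mul, norm_mul, Complex.norm_I, one_mul, one_mul, norm_pow]
    _ ≤ (2*M/s + 21*M/s^3)/(s^2/2) + (5*M/s)/(s^2/2)^2 := by
        gcongr <;> first | exact hg2 | exact hg1 | positivity
    _ = 4*M/s^3 + 62*M/s^5 := by field_simp; ring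
    _ ≤ 35*M/s^3 := by
        have e2 : 35*M/s^3 - (4*M/s^3 + 62*M/s^5) = M*(31*s^2 - 62)/s^5 := by
          field_simp; ring
        have hnum : 0 ≤ M*(31*s^2 - 62) := mul_nonneg hM (by linarith)
        nlinarith [div_nonneg hnum (by positivity : (0:ℝ) ≤ s^5), e2]

end Bounds

lemma cont_sC : Continuous sC :=
  Complex.continuous_ofReal.comp (Real.continuous_sqrt.comp continuous_neg)

lemma cont_dC : Continuous (dC σ) := by
  unfold dC; fun_prop

lemma cont_phC : Continuous (phC σ) := by
  unfold phC; fun_prop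

lemma contAt_hh1 (hσ : |σ| ≤ 1) (hy : y ≤ -2) (hcF : Continuous F)
    (hcF1 : Continuous (deriv F)) (hcF2 : Continuous (deriv (deriv F))) :
    ContinuousAt (hh1 σ F) y := by
  have hy0 : y < 0 := by linarith
  have hs : sC y ≠ 0 := sC_ne hy0
  have hd : dC σ y ≠ 0 := dC_ne hσ hy
  have h2s : (2:ℂ) * sC y ≠ 0 := by simpa using hs
  have hs3 : (sC y)^3 ≠ 0 := pow_ne_zero _ hs
  have h4s3 : (4:ℂ) * (sC y)^3 ≠ 0 := by simpa using hs3
  have hd2 : (dC σ y)^2 ≠ 0 := pow_ne_zero _ hd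
  have hd3 : (dC σ y)^3 ≠ 0 := pow_ne_zero _ hd
  have hcs : Continuous sC := cont_sC
  have hcd : Continuous (dC σ) := cont_dC
  unfold hh1 gg2 gg1
  fun_prop (disch := assumption)

lemma comp_integral {A : ℝ} (hA : A < -3) :
    ∫ x in A..(-2:ℝ), 1/(Real.sqrt (-x))^3 = 2/Real.sqrt 2 - 2/Real.sqrt (-A) := by
  have hAle : A ≤ (-2:ℝ) := by linarith
  have hderiv : ∀ x ∈ Set.uIcc A (-2:ℝ),
      HasDerivAt (fun x => 2/Real.sqrt (-x)) (1/(Real.sqrt (-x))^3) x := by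
    intro x hx
    rw [Set.uIcc_of_le hAle] at hx
    have hx0 : x < 0 := lt_of_le_of_lt hx.2 (by norm_num)
    have hs0 : 0 < Real.sqrt (-x) := Real.sqrt_pos.mpr (by linarith)
    have h := (hasDerivAt_const x (2:ℝ)).div (sqrtneg_hasDeriv hx0) hs0.ne'
    refine h.congr_deriv ?_; symm
    field_simp
    ring
  have hint : IntervalIntegrable (fun x => 1/(Real.sqrt (-x))^3) volume A (-2:ℝ) := by
    apply ContinuousOn.intervalIntegrable
    apply ContinuousOn.div continuousOn_const
      (((Real.continuous_sqrt.comp continuous_neg).pow 3).continuousOn)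
    intro x hx
    rw [Set.uIcc_of_le hAle] at hx
    have hx0 : x < 0 := lt_of_le_of_lt hx.2 (by norm_num)
    exact pow_ne_zero _ (ne_of_gt (Real.sqrt_pos.mpr (by simp; linarith)))
  have := intervalIntegral.integral_eq_sub_of_hasDerivAt hderiv hint
  rw [this]
  norm_num

theorem oscillatory_tail_bound :
    ∃ C : ℝ, 0 < C ∧ ∀ (l σ : ℝ) (F : ℝ → ℂ) (A : ℝ),
      1 < l → |σ| ≤ 1 → ContDiff ℝ 2 F →
      (∀ i : Fin 3, BddAbove (Set.range fun x => ‖iteratedDeriv i F x‖)) →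
      A < -3 →
      ‖∫ y in A..(-2 : ℝ),
          Complex.exp (-Complex.I * ((y : ℂ)^2 + 2 * (y : ℂ) * (σ : ℂ)) / 2) *
            S1 y * F y‖ ≤ C * C2normG F := by
  refine ⟨100, by norm_num, ?_⟩
  intro l σ F A hl hσ hF hbdd hA
  set M : ℝ := C2normG F with hMdef
  -- basic sup bounds
  have hMb : ∀ i : Fin 3, ∀ x : ℝ, ‖iteratedDeriv i F x‖ ≤ M := by
    intro i x
    rw [hMdef]
    unfold C2normG
    have ha : ‖iteratedDeriv i F x‖ ≤ ⨆ x : ℝ, ‖iteratedDeriv (i : Fin 3) F x‖ :=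
      le_ciSup (hbdd i) x
    have hb : (⨆ x : ℝ, ‖iteratedDeriv (i : Fin 3) F x‖) ≤ M :=
      le_ciSup (f := fun j : Fin 3 => ⨆ x : ℝ, ‖iteratedDeriv (j : Fin 3) F x‖)
        (Set.Finite.bddAbove (Set.finite_range _)) i
    exact ha.trans hb
  have h0 : ∀ x, ‖F x‖ ≤ M := by
    intro x; simpa [iteratedDeriv_zero] using hMb 0 x
  have h1 : ∀ x, ‖deriv F x‖ ≤ M := by
    intro x; simpa [iteratedDeriv_one] using hMb 1 x
  have e2 : iteratedDeriv ((2 : Fin 3) : ℕ) F = deriv (deriv F) := by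
    rw [show ((2 : Fin 3) : ℕ) = 1 + 1 from rfl, iteratedDeriv_succ, iteratedDeriv_one]
  have h2 : ∀ x, ‖deriv (deriv F) x‖ ≤ M := by
    intro x; have := hMb 2 x; rwa [e2] at this
  have hM : 0 ≤ M := le_trans (norm_nonneg _) (h0 0)
  -- differentiability
  have h21 : (2 : WithTop ℕ∞) = (1 : WithTop ℕ∞) + 1 := by norm_num
  rw [h21] at hF
  obtain ⟨hdF, -, hF1c⟩ := contDiff_succ_iff_deriv.mp hF
  obtain ⟨hdF1, hcF2⟩ := contDiff_one_iff_deriv.mp hF1c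
  have hcF : Continuous F := hdF.continuous
  have hcF1 : Continuous (deriv F) := hF1c.continuous
  have hAle : A ≤ (-2:ℝ) := by linarith
  have huIcc : Set.uIcc A (-2:ℝ) = Set.Icc A (-2) := Set.uIcc_of_le hAle
  set Φ : ℝ → ℂ := fun x => phC σ x * (gg σ F x - hh σ F x) with hPhidef
  -- FTC part
  have hderiv : ∀ x ∈ Set.uIcc A (-2:ℝ),
      HasDerivAt Φ (phC σ x * S1 x * F x - phC σ x * hh1 σ F x) x := by
    intro x hx
    rw [huIcc] at hx
    have hx2 : x ≤ -2 := hx.2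
    exact Phi_hasDeriv (by linarith) (dC_ne hσ hx2) (hdF x).hasDerivAt (hdF1 x).hasDerivAt
  have hconthh1 : ContinuousOn (fun x => phC σ x * hh1 σ F x) (Set.Icc A (-2:ℝ)) := by
    intro x hx
    exact ((cont_phC.continuousAt).mul (contAt_hh1 hσ hx.2 hcF hcF1 hcF2)).continuousWithinAt
  have hcontf : ContinuousOn (fun x => phC σ x * S1 x * F x) (Set.Icc A (-2:ℝ)) := by
    apply ContinuousOn.congr (f := fun x => phC σ x * (-Complex.I * sC x) * F x)
    · exact ((cont_phC.mul (continuous_const.mul cont_sC)).mul hcF).continuousOn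
    · intro x hx
      show phC σ x * S1 x * F x = phC σ x * (-Complex.I * sC x) * F x
      rw [S1_eq (show x < 0 by have := hx.2; linarith)]
  have hint1 : IntervalIntegrable (fun x => phC σ x * S1 x * F x - phC σ x * hh1 σ F x)
      volume A (-2:ℝ) := by
    apply ContinuousOn.intervalIntegrable
    rw [huIcc]
    exact hcontf.sub hconthh1
  have hint2 : IntervalIntegrable (fun x => phC σ x * hh1 σ F x) volume A (-2:ℝ) := by
    apply ContinuousOn.intervalIntegrable
    rw [huIcc]
    exact hconthh1
  have key : ∫ x in A..(-2:ℝ), (phC σ x * S1 x * F x - phC σ x * hh1 σ F x)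
      = Φ (-2) - Φ A := intervalIntegral.integral_eq_sub_of_hasDerivAt hderiv hint1
  have hsplit : ∫ x in A..(-2:ℝ), phC σ x * S1 x * F x
      = (Φ (-2) - Φ A) + ∫ x in A..(-2:ℝ), phC σ x * hh1 σ F x := by
    rw [← key, ← intervalIntegral.integral_add hint1 hint2]
    congr 1
    funext x
    ring
  -- boundary bounds
  have hPhib : ∀ x : ℝ, x ≤ -2 → ‖Φ x‖ ≤ 7*M := by
    intro x hx
    have := bound_gg (σ := σ) hσ hx hM (h0 x) (h1 x) (h2 x)
    have hhb := bound_hh (σ := σ) hσ hx hM (h0 x) (h1 x) (h2 x)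
    calc ‖Φ x‖ = ‖phC σ x‖ * ‖gg σ F x - hh σ F x‖ := norm_mul _ _
      _ ≤ 1 * (2*M + 5*M) := by
          rw [norm_phC]
          gcongr
          exact (norm_sub_le _ _).trans (by linarith)
      _ = 7*M := by ring
  -- tail bound
  have hint3 : IntervalIntegrable (fun x => ‖phC σ x * hh1 σ F x‖) volume A (-2:ℝ) := by
    apply ContinuousOn.intervalIntegrable
    rw [huIcc]
    exact hconthh1.norm
  have hint4 : IntervalIntegrable (fun x => 35*M*(1/(Real.sqrt (-x))^3)) volume A (-2:ℝ) := by
    apply ContinuousOn.intervalIntegrable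
    apply ContinuousOn.mul continuousOn_const
    apply ContinuousOn.div continuousOn_const
      (((Real.continuous_sqrt.comp continuous_neg).pow 3).continuousOn)
    intro x hx
    rw [huIcc] at hx
    have hx0 : x < 0 := lt_of_le_of_lt hx.2 (by norm_num)
    exact pow_ne_zero _ (ne_of_gt (Real.sqrt_pos.mpr (by simp; linarith)))
  have htail : ‖∫ x in A..(-2:ℝ), phC σ x * hh1 σ F x‖ ≤ 70*M := by
    calc ‖∫ x in A..(-2:ℝ), phC σ x * hh1 σ F x‖
        ≤ ∫ x in A..(-2:ℝ), ‖phC σ x * hh1 σ F x‖ :=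
          intervalIntegral.norm_integral_le_integral_norm hAle
      _ ≤ ∫ x in A..(-2:ℝ), 35*M*(1/(Real.sqrt (-x))^3) := by
          apply intervalIntegral.integral_mono_on hAle hint3 hint4
          intro x hx
          rw [norm_mul, norm_phC, one_mul, mul_one_div]
          exact bound_hh1 (σ := σ) hσ hx.2 hM (h0 x) (h1 x) (h2 x)
      _ = 35*M*(2/Real.sqrt 2 - 2/Real.sqrt (-A)) := by
          rw [intervalIntegral.integral_const_mul, comp_integral hA]
      _ ≤ 70*M := by
          have hs2 : (1:ℝ) ≤ Real.sqrt 2 := by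
            rw [show (1:ℝ) = Real.sqrt 1 from (Real.sqrt_one).symm]
            exact Real.sqrt_le_sqrt (by norm_num)
          have hx1 : 2/Real.sqrt 2 ≤ 2 := by
            rw [div_le_iff₀ (by linarith)]
            nlinarith
          have hx2 : 0 ≤ 2/Real.sqrt (-A) := by positivity
          nlinarith
  -- final
  calc ‖∫ x in A..(-2:ℝ), phC σ x * S1 x * F x‖
      ≤ ‖Φ (-2) - Φ A‖ + ‖∫ x in A..(-2:ℝ), phC σ x * hh1 σ F x‖ := by
        rw [hsplit]; exact norm_add_le _ _
    _ ≤ (‖Φ (-2:ℝ)‖ + ‖Φ A‖) + 70*M :=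
        add_le_add (norm_sub_le _ _) htail
    _ ≤ 100 * M := by
        have b1 := hPhib (-2) (by norm_num)
        have b2 := hPhib A (by linarith)
        linarith
end
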